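/- Let X be a real Banach space, let 0 < T < ∞, and let S : [0,∞) → L(X) be a strongly continuous semigroup: S(0) = I, S(a + b) = S(a) S(b) for all a, b ≥ 0, and t ↦ S(t)x is continuous on [0,∞) for every x ∈ X. Let v : (0,T) → X be strongly measurable and suppose that for every t ∈ [0,T) one has S(s − t) v(s) = 0 for almost every s ∈ (t,T). Then v(s) = 0 for almost every s ∈ (0,T). -/

import Mathlib

open MeasureTheory Set

/- A.e. in `(0,T)`, `S(s-q) v(s) = 0` holds simultaneously for all rational `q ∈ [0,s)`,
as only countably many null sets are discarded; since
`S(s-q) v(s) → S(0) v(s) = v(s)` as `q ↑ s` by strong continuity, `v(s) = 0` there. -/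

theorem eq_of_continuousWithinAt_Iio_of_forall_rat {Y : Type*} [TopologicalSpace Y] [T1Space Y]
    {g : ℝ → Y} {a s : ℝ} {c : Y} (hg : ContinuousWithinAt g (Iio s) s) (has : a < s)
    (hc : ∀ q : ℚ, a < q → (q : ℝ) < s → g q = c) : g s = c := by
  set A := Ioo a s ∩ range ((↑) : ℚ → ℝ)
  have hsA : s ∈ closure A :=
    closure_minimal (Rat.denseRange_cast.open_subset_closure_inter isOpen_Ioo) isClosed_closure
      (by rw [closure_Ioo has.ne]; exact right_mem_Icc.2 has.le)
  have hgA : g '' A ⊆ {c} := by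
    rintro _ ⟨_, ⟨⟨hqa, hqs⟩, q, rfl⟩, rfl⟩
    exact hc q hqa hqs
  have := (hg.mono (inter_subset_left.trans Ioo_subset_Iio_self)).mem_closure_image hsA
  simpa using closure_mono hgA this

theorem stmt_13_general
    {X : Type*} [NormedAddCommGroup X] [NormedSpace ℝ X]
    (T : ℝ)
    (S : ℝ → X →L[ℝ] X)
    (hS0 : S 0 = 1)
    (hScont : ∀ x : X, ContinuousOn (fun t => S t x) (Set.Ici 0))
    (v : ℝ → X)
    (hzero : ∀ t ∈ Set.Ico (0 : ℝ) T,
      ∀ᵐ s ∂(volume.restrict (Set.Ioo t T)), S (s - t) (v s) = 0) :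
    ∀ᵐ s ∂(volume.restrict (Set.Ioo 0 T)), v s = 0 := by
  have hrat : ∀ᵐ s ∂(volume.restrict (Ioo 0 T)),
      ∀ q : ℚ, (q : ℝ) ∈ Ico 0 T → s ∈ Ioo (q : ℝ) T → S (s - q) (v s) = 0 := by
    refine ae_all_iff.2 fun q => ?_
    by_cases hq : (q : ℝ) ∈ Ico 0 T
    · filter_upwards [ae_restrict_of_ae ((ae_restrict_iff' measurableSet_Ioo).1 (hzero q hq))]
        with s hs _ using hs
    · exact Filter.Eventually.of_forall fun s h => absurd h hq
  filter_upwards [hrat, ae_restrict_mem measurableSet_Ioo] with s hs ⟨hs0, hsT⟩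
  have hcont : ContinuousWithinAt (fun r => S (s - r) (v s)) (Iio s) s := by
    have h0 := hScont (v s) (s - s) (by simp)
    exact h0.comp (by fun_prop) fun r (hr : r < s) => show 0 ≤ s - r by linarith
  simpa [hS0] using eq_of_continuousWithinAt_Iio_of_forall_rat hcont hs0
    fun q hq0 hqs => hs q ⟨hq0.le, hqs.trans hsT⟩ ⟨hqs, hsT⟩

/-- Let `S` be a strongly continuous semigroup on a Banach space
`X` and let `v : (0,T) → X` be strongly measurable. If for every `t ∈ [0,T)` one has
`S(s-t) v(s) = 0` for almost every `s ∈ (t,T)`, then `v = 0` almost everywhere on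
`(0,T)`. -/
theorem stmt_13
    {X : Type*} [NormedAddCommGroup X] [NormedSpace ℝ X] [CompleteSpace X]
    (T : ℝ) (hT : 0 < T)
    (S : ℝ → X →L[ℝ] X)
    (hS0 : S 0 = 1)
    (hSadd : ∀ a b : ℝ, 0 ≤ a → 0 ≤ b → S (a + b) = (S a).comp (S b))
    (hScont : ∀ x : X, ContinuousOn (fun t => S t x) (Set.Ici 0))
    (v : ℝ → X)
    (hv : AEStronglyMeasurable v (volume.restrict (Set.Ioo 0 T)))
    (hzero : ∀ t ∈ Set.Ico (0 : ℝ) T,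
      ∀ᵐ s ∂(volume.restrict (Set.Ioo t T)), S (s - t) (v s) = 0) :
    ∀ᵐ s ∂(volume.restrict (Set.Ioo 0 T)), v s = 0 :=
  stmt_13_general T S hS0 hScont v hzero
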